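/- arXiv:1010.4766 — 8 statements merged into one kernel-verified Lean document; each statement's English description precedes it below -/
import Mathlib

section
/- Let K be a number field. For every g ∈ P_K⁺, the subgroups P_𝓞⁺ and g P_𝓞⁺ g⁻¹ of P_K⁺ are commensurable, i.e. P_𝓞⁺ ∩ g P_𝓞⁺ g⁻¹ has finite index both in P_𝓞⁺ and in g P_𝓞⁺ g⁻¹. (In other words, (P_𝓞⁺, P_K⁺) is a Hecke pair.) -/
open scoped NumberField

/-- The subgroup `K*₊ ⊆ Kˣ` of totally positive elements of a field `K`. -/
def totallyPositiveUnits (K : Type*) [Field K] : Subgroup Kˣ where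
  carrier := {x | ∀ φ : K →+* ℝ, 0 < φ x}
  mul_mem' {a b} ha hb φ := by
    rw [Units.val_mul, map_mul]; exact mul_pos (ha φ) (hb φ)
  one_mem' φ := by simp
  inv_mem' {a} ha φ := by
    rw [Units.val_inv_eq_inv_val, map_inv₀]
    exact inv_pos.mpr (ha φ)

/-- The subgroup `𝓞*_{K,+} ⊆ Kˣ` of totally positive units of the ring of integers. -/
def totallyPositiveIntegerUnits (K : Type*) [Field K] : Subgroup Kˣ where
  carrier := {x | IsIntegral ℤ (x : K) ∧ IsIntegral ℤ ((x⁻¹ : Kˣ) : K) ∧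
    ∀ φ : K →+* ℝ, 0 < φ x}
  one_mem' := ⟨by simpa using isIntegral_one, by simpa using isIntegral_one,
    fun φ => by simp⟩
  mul_mem' {a b} ha hb := by
    refine ⟨by rw [Units.val_mul]; exact ha.1.mul hb.1, ?_, fun φ => by
      rw [Units.val_mul, map_mul]; exact mul_pos (ha.2.2 φ) (hb.2.2 φ)⟩
    rw [mul_inv_rev, Units.val_mul]
    exact hb.2.1.mul ha.2.1
  inv_mem' {a} ha := ⟨ha.2.1, by simpa using ha.1, fun φ => by
    rw [Units.val_inv_eq_inv_val, map_inv₀]; exact inv_pos.mpr (ha.2.2 φ)⟩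

/-- The action of `Kˣ` on the additive group of `K` by multiplication, as a
homomorphism into `MulAut (Multiplicative K)`. -/
def affineAction (K : Type*) [Field K] : Kˣ →* MulAut (Multiplicative K) where
  toFun x :=
    { toFun := fun y => Multiplicative.ofAdd (x • y.toAdd)
      invFun := fun y => Multiplicative.ofAdd (x⁻¹ • y.toAdd)
      left_inv := fun y => by simp [smul_smul]
      right_inv := fun y => by simp [smul_smul]
      map_mul' := fun a b => by
        simp [toAdd_mul, smul_add, ofAdd_add] }
  map_one' := by
    ext y; simp
  map_mul' a b := by
    ext y; simp [mul_smul]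

/-- The affine group `P_K⁺ = K ⋊ K*₊`, realized as a subgroup of
`K ⋊ Kˣ`. -/
def PKplus (K : Type*) [Field K] : Subgroup (Multiplicative K ⋊[affineAction K] Kˣ) :=
  (totallyPositiveUnits K).comap (SemidirectProduct.rightHom)

/-- The subgroup `P_𝓞⁺ = 𝓞_K ⋊ 𝓞*_{K,+}` of `K ⋊ Kˣ`. -/
def POplus (K : Type*) [Field K] : Subgroup (Multiplicative K ⋊[affineAction K] Kˣ) where
  carrier := {p | IsIntegral ℤ p.left.toAdd ∧ p.right ∈ totallyPositiveIntegerUnits K}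
  one_mem' := ⟨by simpa using isIntegral_zero, one_mem _⟩
  mul_mem' {a b} ha hb := by
    refine ⟨?_, mul_mem ha.2 hb.2⟩
    rw [SemidirectProduct.mul_left]
    simp only [affineAction, MonoidHom.coe_mk, OneHom.coe_mk, MulEquiv.coe_mk,
      Equiv.coe_fn_mk, toAdd_mul, toAdd_ofAdd, Units.smul_def,
      smul_eq_mul]
    exact ha.1.add (ha.2.1.mul hb.1)
  inv_mem' {a} ha := by
    refine ⟨?_, inv_mem ha.2⟩
    rw [SemidirectProduct.inv_left]
    simp only [affineAction, map_inv, MonoidHom.coe_mk, OneHom.coe_mk, MulEquiv.coe_mk,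
      MulAut.inv_def, MulEquiv.symm_mk, Equiv.coe_fn_mk, toAdd_inv,
      toAdd_ofAdd, Units.smul_def, smul_eq_mul]
    exact ((ha.2).2.1.mul ha.1).neg

/-!
Write `g = (b, a)`. Conjugation acts by `g⁻¹ (y, u) g = (a⁻¹ (y + (u - 1) b), u)`, so for
`p, q ∈ P_𝓞⁺` the first coordinate of `g⁻¹ (p⁻¹ q) g` is
`a⁻¹ u_p⁻¹ ((y_q - y_p) + (u_q - u_p) b)`. If a nonzero integer `M` makes `M a⁻¹` and `M a⁻¹ b`
integral, this is integral as soon as `p ≡ q` coordinatewise modulo `M 𝓞_K`. As `𝓞_K / M 𝓞_K` is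
finite, `P_𝓞⁺ ∩ g P_𝓞⁺ g⁻¹` has finite index in `P_𝓞⁺` for every `g`; conjugating by `g⁻¹`
gives the other index.
-/

theorem Subgroup.finiteIndex_of_eq_imp_inv_mul_mem {G T : Type*} [Group G] [Finite T]
    (H : Subgroup G) (F : G → T) (hF : ∀ p q, F p = F q → p⁻¹ * q ∈ H) : H.FiniteIndex := by
  have : Finite (G ⧸ H) := Finite.of_surjective (fun t : Set.range F => (t.2.choose : G ⧸ H)) <| by
    rintro ⟨g⟩
    exact ⟨⟨F g, g, rfl⟩, QuotientGroup.eq.mpr (hF _ _ (⟨g, rfl⟩ : F g ∈ Set.range F).choose_spec)⟩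
  exact Subgroup.finiteIndex_of_finite_quotient

section
variable {K : Type*} [Field K]

theorem toAdd_left_mul (h k : Multiplicative K ⋊[affineAction K] Kˣ) :
    (h * k).left.toAdd = h.left.toAdd + h.right * k.left.toAdd := by
  rw [SemidirectProduct.mul_left]
  simp [affineAction, Units.smul_def]

theorem toAdd_left_inv (h : Multiplicative K ⋊[affineAction K] Kˣ) :
    h⁻¹.left.toAdd = -((h.right : K)⁻¹ * h.left.toAdd) := by
  rw [SemidirectProduct.inv_left]
  simp [affineAction, Units.smul_def]

theorem right_conj (g h : Multiplicative K ⋊[affineAction K] Kˣ) :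
    (g⁻¹ * h * g).right = h.right := by
  simp [mul_comm]

theorem toAdd_left_conj_inv_mul (g p q : Multiplicative K ⋊[affineAction K] Kˣ) :
    (g⁻¹ * (p⁻¹ * q) * g).left.toAdd = (g.right : K)⁻¹ * (p.right : K)⁻¹ *
      (q.left.toAdd - p.left.toAdd + (q.right - p.right) * g.left.toAdd) := by
  simp only [toAdd_left_mul, toAdd_left_inv, SemidirectProduct.mul_right,
    SemidirectProduct.inv_right, Units.val_mul, Units.val_inv_eq_inv_val]
  field_simp
  ring

theorem conj_inv_mul_mem_POplus {g p q : Multiplicative K ⋊[affineAction K] Kˣ} {M s t : K}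
    (hMa : IsIntegral ℤ (M * (g.right : K)⁻¹))
    (hMb : IsIntegral ℤ (M * (g.right : K)⁻¹ * g.left.toAdd))
    (hp : p ∈ POplus K) (hq : q ∈ POplus K) (hs : IsIntegral ℤ s) (ht : IsIntegral ℤ t)
    (hleft : q.left.toAdd - p.left.toAdd = M * s) (hright : (q.right : K) - p.right = M * t) :
    g⁻¹ * (p⁻¹ * q) * g ∈ POplus K := by
  refine ⟨?_, ?_⟩
  · have hpinv : IsIntegral ℤ (p.right : K)⁻¹ := by
      simpa only [Units.val_inv_eq_inv_val] using hp.2.2.1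
    rw [toAdd_left_conj_inv_mul, hleft, hright]
    rw [show (g.right : K)⁻¹ * (p.right : K)⁻¹ * (M * s + M * t * g.left.toAdd) =
        (p.right : K)⁻¹ * (s * (M * (g.right : K)⁻¹) + t * (M * (g.right : K)⁻¹ * g.left.toAdd))
      by ring]
    exact hpinv.mul ((hs.mul hMa).add (ht.mul hMb))
  · rw [right_conj, SemidirectProduct.mul_right, SemidirectProduct.inv_right]
    exact mul_mem (inv_mem hp.2) hq.2

open Pointwise in
theorem relIndex_conjAct_smul_POplus_ne_zero [NumberField K]
    (g : Multiplicative K ⋊[affineAction K] Kˣ) :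
    (ConjAct.toConjAct g • POplus K).relIndex (POplus K) ≠ 0 := by
  classical
  obtain ⟨M, hM0, hM⟩ :=
    exists_integral_multiples ℤ ℚ {(g.right : K)⁻¹, (g.right : K)⁻¹ * g.left.toAdd}
  simp only [Finset.mem_insert, Finset.mem_singleton, forall_eq_or_imp, forall_eq,
    zsmul_eq_mul, ← mul_assoc] at hM
  let I := Ideal.span {(M : 𝓞 K)}
  have : Finite (𝓞 K ⧸ I) := Ideal.finiteQuotientOfFreeOfNeBot _ (by simpa [I] using hM0)
  let F : POplus K → (𝓞 K ⧸ I) × (𝓞 K ⧸ I) := fun p =>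
    (Ideal.Quotient.mk I (IsIntegralClosure.mk' (𝓞 K) _ p.2.1),
      Ideal.Quotient.mk I (IsIntegralClosure.mk' (𝓞 K) _ p.2.2.1))
  have : (ConjAct.toConjAct g • POplus K).subgroupOf (POplus K) |>.FiniteIndex := by
    refine Subgroup.finiteIndex_of_eq_imp_inv_mul_mem _ F fun p q hpq => ?_
    obtain ⟨s, hs⟩ :=
      Ideal.mem_span_singleton'.mp (Ideal.Quotient.eq.mp (congrArg Prod.fst hpq).symm)
    obtain ⟨t, ht⟩ :=
      Ideal.mem_span_singleton'.mp (Ideal.Quotient.eq.mp (congrArg Prod.snd hpq).symm)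
    rw [Subgroup.mem_subgroupOf, Subgroup.mem_pointwise_smul_iff_inv_smul_mem,
      ← ConjAct.toConjAct_inv, ConjAct.toConjAct_smul, inv_inv]
    exact conj_inv_mul_mem_POplus hM.1 hM.2 p.2 q.2 s.isIntegral_coe t.isIntegral_coe
      (by simpa [mul_comm] using congrArg (algebraMap (𝓞 K) K) hs.symm)
      (by simpa [mul_comm] using congrArg (algebraMap (𝓞 K) K) ht.symm)
  exact Subgroup.FiniteIndex.index_ne_zero

end

open Pointwise in
theorem hecke_pair_POplus_PKplus_general (K : Type*) [Field K] [NumberField K]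
    (g : Multiplicative K ⋊[affineAction K] Kˣ) :
    Subgroup.Commensurable (POplus K) ((POplus K).map (MulAut.conj g).toMonoidHom) := by
  change Subgroup.Commensurable (POplus K) (ConjAct.toConjAct g • POplus K)
  refine ⟨?_, relIndex_conjAct_smul_POplus_ne_zero g⟩
  rw [← Subgroup.relIndex_pointwise_smul (ConjAct.toConjAct g)⁻¹, inv_smul_smul,
    ← ConjAct.toConjAct_inv]
  exact relIndex_conjAct_smul_POplus_ne_zero g⁻¹

/-- `(P_𝓞⁺, P_K⁺)` is a Hecke pair: for every `g ∈ P_K⁺`, the subgroups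
`P_𝓞⁺` and `g P_𝓞⁺ g⁻¹` are commensurable, i.e. their intersection has finite index
in both. -/
theorem hecke_pair_POplus_PKplus (K : Type*) [Field K] [NumberField K]
    (g : Multiplicative K ⋊[affineAction K] Kˣ) (hg : g ∈ PKplus K) :
    Subgroup.Commensurable (POplus K) ((POplus K).map (MulAut.conj g).toMonoidHom) :=
  hecke_pair_POplus_PKplus_general K g
end

section
/- Let K be a number field, Γ = P_𝓞⁺, and g = (y,x) ∈ P_K⁺ with multiplicative part x ∈ K*₊. Then the finite indices satisfy [Γ : Γ ∩ g⁻¹Γg] · |N_{K/ℚ}(x)| = [Γ : Γ ∩ gΓg⁻¹], where N_{K/ℚ} denotes the field norm from K to ℚ. (Equivalently, the modular function of the Hecke pair (P_𝓞⁺, P_K⁺), defined as the ratio of the number of left cosets to the number of right cosets of Γ in ΓgΓ, equals |N_{K/ℚ}(x)|⁻¹.) -/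
open scoped NumberField

/-!
Write `x = g.right` and let `π` be the projection onto `Kˣ`, whose kernel is the translation
subgroup `K`. Since `Kˣ` is abelian, `Γ` and `gΓg⁻¹` have the same image under `π`, and the index
of `Γ ∩ gΓg⁻¹` in either group factors as the index of the kernel parts times one and the same
index of images. The kernel parts are the lattices `𝓞_K` and `x𝓞_K`, so the claim becomes
`[𝓞_K : 𝓞_K ∩ x𝓞_K] = |N(x)| [x𝓞_K : 𝓞_K ∩ x𝓞_K]`. Both sides are compared with the common
sublattice `xw𝓞_K`, where `w` is a nonzero integer making `xw` integral, using
`[𝓞_K : z𝓞_K] = |N(z)|` for integral `z`.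
-/

open scoped Pointwise

namespace Subgroup

variable {G : Type*} [Group G]

theorem relIndex_sup_of_le_normalizer {H N : Subgroup G} (hH : H ≤ normalizer (N : Set G)) :
    H.relIndex (H ⊔ N) = H.relIndex N := by
  let e := quotientSubgroupOfEmbeddingOfLE H (le_sup_right : N ≤ H ⊔ N)
  refine (Nat.card_congr (Equiv.ofBijective e ⟨e.injective, ?_⟩)).symm
  intro q
  obtain ⟨⟨x, hx⟩, rfl⟩ := QuotientGroup.mk_surjective q
  -- `H ⊔ N = N * H`, so the coset `x H` has a representative in `N`.
  rw [← SetLike.mem_coe, sup_comm, coe_mul_of_right_le_normalizer_left N H hH] at hx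
  obtain ⟨n, hn, h, hh, rfl⟩ := hx
  refine ⟨QuotientGroup.mk ⟨n, hn⟩, ?_⟩
  rw [quotientSubgroupOfEmbeddingOfLE_apply_mk, QuotientGroup.eq, mem_subgroupOf]
  simpa using hh

section Kernel

variable {D Γ : Subgroup G}

theorem le_normalizer_inf_of_normal (N : Subgroup G) [N.Normal] (hD : D ≤ Γ) :
    D ≤ normalizer ((N ⊓ Γ : Subgroup G) : Set G) :=
  hD.trans <| (le_inf le_normalizer_of_normal le_normalizer).trans
    inf_normalizer_le_normalizer_inf

theorem sup_inf_assoc_of_le_of_normal (N : Subgroup G) [N.Normal] (hD : D ≤ Γ) :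
    (D ⊔ N) ⊓ Γ = D ⊔ N ⊓ Γ := by
  apply SetLike.coe_injective
  rw [coe_mul_of_left_le_normalizer_right _ _ (le_normalizer_inf_of_normal N hD),
    mul_inf_assoc _ _ _ hD, coe_inf, ← mul_normal]

variable {Q : Type*} [Group Q] (π : G →* Q)

theorem relIndex_eq_mul_relIndex_map_of_le (hD : D ≤ Γ) :
    D.relIndex Γ = D.relIndex (π.ker ⊓ Γ) * (D.map π).relIndex (Γ.map π) := by
  calc D.relIndex Γ = D.relIndex (D ⊔ π.ker ⊓ Γ) * (D ⊔ π.ker ⊓ Γ).relIndex Γ :=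
        (relIndex_mul_relIndex _ _ _ le_sup_left (sup_le hD inf_le_right)).symm
    _ = D.relIndex (π.ker ⊓ Γ) * (D.map π).relIndex (Γ.map π) := by
        rw [relIndex_sup_of_le_normalizer (le_normalizer_inf_of_normal π.ker hD),
          ← sup_inf_assoc_of_le_of_normal π.ker hD, inf_relIndex_right, ← relIndex_comap,
          comap_map_eq]

theorem relIndex_eq_relIndex_ker_inf_mul (Γ Γ' : Subgroup G) :
    Γ.relIndex Γ' =
      (π.ker ⊓ Γ).relIndex (π.ker ⊓ Γ') * ((Γ ⊓ Γ').map π).relIndex (Γ'.map π) := by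
  rw [← inf_relIndex_right Γ Γ', relIndex_eq_mul_relIndex_map_of_le π inf_le_right,
    ← inf_relIndex_right (Γ ⊓ Γ'), ← inf_relIndex_right (π.ker ⊓ Γ)]
  congr 2
  ext
  simp only [mem_inf]
  tauto

theorem relIndex_mul_relIndex_ker_inf_of_map_eq {Γ Γ' : Subgroup G} (h : Γ.map π = Γ'.map π) :
    Γ.relIndex Γ' * (π.ker ⊓ Γ').relIndex (π.ker ⊓ Γ) =
      Γ'.relIndex Γ * (π.ker ⊓ Γ).relIndex (π.ker ⊓ Γ') := by
  rw [relIndex_eq_relIndex_ker_inf_mul π Γ Γ', relIndex_eq_relIndex_ker_inf_mul π Γ' Γ,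
    inf_comm Γ' Γ, h]
  ring

end Kernel

theorem map_map_conj {Q : Type*} [CommGroup Q] (π : G →* Q) (H : Subgroup G) (g : G) :
    (H.map (MulAut.conj g).toMonoidHom).map π = H.map π := by
  rw [map_map]
  congr 1
  ext h
  simp

theorem relIndex_map_conj_inv (H K : Subgroup G) (g : G) :
    (H.map (MulAut.conj g⁻¹).toMonoidHom).relIndex K =
      H.relIndex (K.map (MulAut.conj g).toMonoidHom) := by
  rw [map_inv, MulAut.inv_def, map_equiv_eq_comap_symm', MulEquiv.symm_symm, relIndex_comap]

@[to_additive relIndex_mul_relIndex_of_le_inf]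
theorem relIndex_mul_relIndex_of_le_inf {A B C : Subgroup G} (hC : C ≤ A ⊓ B) :
    B.relIndex A * C.relIndex B = A.relIndex B * C.relIndex A := by
  rw [← relIndex_mul_relIndex C (A ⊓ B) B hC inf_le_right,
    ← relIndex_mul_relIndex C (A ⊓ B) A hC inf_le_left, inf_relIndex_right, inf_relIndex_left]
  ring

end Subgroup

namespace SemidirectProduct

variable {N H : Type*} [Group H]

theorem relIndex_ker_rightHom_inf [Group N] {φ : H →* MulAut N} (Γ Γ' : Subgroup (N ⋊[φ] H)) :
    (rightHom.ker ⊓ Γ).relIndex (rightHom.ker ⊓ Γ') =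
      (Γ.comap inl).relIndex (Γ'.comap inl) := by
  rw [← range_inl_eq_ker_rightHom, ← Subgroup.map_comap_eq, ← Subgroup.map_comap_eq,
    Subgroup.relIndex_map_map_of_injective _ _ inl_injective]

variable [CommGroup N] {φ : H →* MulAut N}

theorem conj_inl (g : N ⋊[φ] H) (n : N) : MulAut.conj g (inl n) = inl (φ g.right n) := by
  ext <;> simp [mul_comm]

theorem comap_inl_map_conj (Γ : Subgroup (N ⋊[φ] H)) (g : N ⋊[φ] H) :
    (Γ.map (MulAut.conj g).toMonoidHom).comap inl =
      (Γ.comap inl).map (φ g.right).toMonoidHom := by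
  ext n
  rw [Subgroup.mem_comap, Subgroup.mem_map_equiv, Subgroup.mem_map_equiv, Subgroup.mem_comap,
    ← MulAut.inv_def, ← MulAut.inv_def, ← map_inv, conj_inl, inv_right, map_inv]

end SemidirectProduct

section IntegerLattice

open NumberField

def integerLattice (K : Type*) [Field K] : AddSubgroup K :=
  (algebraMap (𝓞 K) K).toAddMonoidHom.range

variable {K : Type*} [Field K]

theorem mem_integerLattice {y : K} : y ∈ integerLattice K ↔ IsIntegral ℤ y :=
  ⟨fun ⟨c, hc⟩ => hc ▸ c.isIntegral_coe, fun hy => ⟨⟨y, hy⟩, rfl⟩⟩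

theorem smul_integerLattice_le {u : Kˣ} (hu : IsIntegral ℤ (u : K)) :
    u • integerLattice K ≤ integerLattice K := by
  rintro _ ⟨y, hy, rfl⟩
  exact mem_integerLattice.2 (hu.mul (mem_integerLattice.1 hy))

theorem map_affineAction_toSubgroup (x : Kˣ) (A : AddSubgroup K) :
    (AddSubgroup.toSubgroup A).map (affineAction K x).toMonoidHom =
      AddSubgroup.toSubgroup (x • A) := by
  ext y
  constructor
  · rintro ⟨a, ha, rfl⟩
    exact ⟨a.toAdd, ha, rfl⟩
  · rintro ⟨a, ha, hy⟩
    exact ⟨Multiplicative.ofAdd a, ha, congrArg Multiplicative.ofAdd hy⟩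

theorem comap_inl_POplus :
    (POplus K).comap SemidirectProduct.inl = AddSubgroup.toSubgroup (integerLattice K) := by
  ext y
  exact ⟨fun h => (mem_integerLattice (K := K)).2 h.1,
    fun h => ⟨mem_integerLattice.1 h, one_mem _⟩⟩

variable [NumberField K]

theorem relIndex_smul_integerLattice {u : Kˣ} (hu : IsIntegral ℤ (u : K)) :
    ((u • integerLattice K).relIndex (integerLattice K) : ℚ) = |Algebra.norm ℚ (u : K)| := by
  let c : 𝓞 K := ⟨u, hu⟩
  have hspan : (u • integerLattice K).comap (algebraMap (𝓞 K) K).toAddMonoidHom =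
      (Ideal.span {c}).toAddSubgroup := by
    ext a
    rw [AddSubgroup.mem_comap, Submodule.mem_toAddSubgroup, Ideal.mem_span_singleton']
    constructor
    · rintro ⟨_, ⟨b, rfl⟩, hb⟩
      exact ⟨b, RingOfIntegers.ext ((map_mul _ _ _).trans ((mul_comm _ _).trans hb))⟩
    · rintro ⟨b, rfl⟩
      exact ⟨_, ⟨b, rfl⟩, (mul_comm _ _).trans (map_mul (algebraMap (𝓞 K) K) b c).symm⟩
  change ((u • integerLattice K).relIndex (algebraMap (𝓞 K) K).toAddMonoidHom.range : ℚ) = _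
  rw [← AddSubgroup.index_comap, hspan, ← Ideal.absNorm_eq_index, Ideal.absNorm_span_singleton,
    Nat.cast_natAbs, Int.cast_abs, Algebra.coe_norm_int]
  rfl

theorem abs_norm_ne_zero (w : Kˣ) : |Algebra.norm ℚ (w : K)| ≠ 0 :=
  abs_ne_zero.2 (Algebra.norm_ne_zero_iff.2 w.ne_zero)

theorem exists_isIntegral_mul (x : Kˣ) :
    ∃ w : Kˣ, IsIntegral ℤ (w : K) ∧ IsIntegral ℤ ((x * w : Kˣ) : K) := by
  obtain ⟨n, hn, hnx⟩ :=
    ((IsFractionRing.isAlgebraic_iff ℤ ℚ K).2 (.of_finite ℚ (x : K))).exists_integral_multiple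
  refine ⟨Units.mk0 (n : K) (Int.cast_ne_zero.2 hn), isIntegral_algebraMap, ?_⟩
  simpa [zsmul_eq_mul, mul_comm] using hnx

theorem relIndex_mul_smul_integerLattice {w : Kˣ} (hw : IsIntegral ℤ (w : K)) (x : Kˣ) :
    (((x * w) • integerLattice K).relIndex (x • integerLattice K) : ℚ) =
      |Algebra.norm ℚ (w : K)| := by
  rw [mul_smul]
  exact (congrArg _ (AddSubgroup.relIndex_pointwise_smul x _ _)).trans
    (relIndex_smul_integerLattice hw)

theorem relIndex_integerLattice_smul_ne_zero (x : Kˣ) :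
    (integerLattice K).relIndex (x • integerLattice K) ≠ 0 := by
  obtain ⟨w, hw, hxw⟩ := exists_isIntegral_mul x
  refine fun h => abs_norm_ne_zero w ?_
  rw [← relIndex_mul_smul_integerLattice hw x,
    AddSubgroup.relIndex_eq_zero_of_le_left (smul_integerLattice_le hxw) h, Nat.cast_zero]

theorem relIndex_smul_integerLattice_eq (x : Kˣ) :
    ((x • integerLattice K).relIndex (integerLattice K) : ℚ) =
      |Algebra.norm ℚ (x : K)| * (integerLattice K).relIndex (x • integerLattice K) := by
  obtain ⟨w, hw, hxw⟩ := exists_isIntegral_mul x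
  have hC : (x * w) • integerLattice K ≤ integerLattice K ⊓ x • integerLattice K := by
    refine le_inf (smul_integerLattice_le hxw) ?_
    rw [mul_smul]
    exact AddSubgroup.map_mono (smul_integerLattice_le hw)
  have key := congrArg (Nat.cast : ℕ → ℚ) (AddSubgroup.relIndex_mul_relIndex_of_le_inf hC)
  push_cast at key
  rw [relIndex_mul_smul_integerLattice hw, relIndex_smul_integerLattice hxw, Units.val_mul,
    map_mul, abs_mul] at key
  apply mul_right_cancel₀ (abs_norm_ne_zero w)
  linear_combination key

end IntegerLattice

open SemidirectProduct in
theorem modular_function_POplus_PKplus_general (K : Type*) [Field K] [NumberField K]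
    (g : Multiplicative K ⋊[affineAction K] Kˣ) :
    ((((POplus K).map (MulAut.conj g⁻¹).toMonoidHom).relIndex (POplus K) : ℚ))
        * |Algebra.norm ℚ ((g.right : Kˣ) : K)| =
      (((POplus K).map (MulAut.conj g).toMonoidHom).relIndex (POplus K) : ℚ) := by
  set Γ := POplus K
  have hconj : (Γ.map (MulAut.conj g).toMonoidHom).comap inl =
      AddSubgroup.toSubgroup (g.right • integerLattice K) := by
    rw [comap_inl_map_conj, comap_inl_POplus, map_affineAction_toSubgroup]
  have hkernel := Subgroup.relIndex_mul_relIndex_ker_inf_of_map_eq rightHom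
    (Subgroup.map_map_conj rightHom Γ g).symm
  rw [relIndex_ker_rightHom_inf, relIndex_ker_rightHom_inf, comap_inl_POplus, hconj,
    AddSubgroup.relIndex_toSubgroup, AddSubgroup.relIndex_toSubgroup] at hkernel
  rw [Subgroup.relIndex_map_conj_inv]
  apply mul_right_cancel₀ (Nat.cast_ne_zero.2 (relIndex_integerLattice_smul_ne_zero g.right))
  rw [mul_assoc, ← relIndex_smul_integerLattice_eq]
  exact_mod_cast hkernel

/-- The modular function of the Hecke pair `(P_𝓞⁺, P_K⁺)`:
for `g = (y,x) ∈ P_K⁺`, `[Γ : Γ ∩ g⁻¹Γg] · |N_{K/ℚ}(x)| = [Γ : Γ ∩ gΓg⁻¹]`,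
where `Γ = P_𝓞⁺`. -/
theorem modular_function_POplus_PKplus (K : Type*) [Field K] [NumberField K]
    (g : Multiplicative K ⋊[affineAction K] Kˣ) (hg : g ∈ PKplus K) :
    ((((POplus K).map (MulAut.conj g⁻¹).toMonoidHom).relIndex (POplus K) : ℚ))
        * |Algebra.norm ℚ ((g.right : Kˣ) : K)| =
      (((POplus K).map (MulAut.conj g).toMonoidHom).relIndex (POplus K) : ℚ) :=
  modular_function_POplus_PKplus_general K g
end

section
/- Let K be a number field. Inside the topological group A_{K,f}ˣ, the intersection of (the diagonal image of) K*₊ with the closure of (the diagonal image of) 𝓞*_{K,+} equals (the diagonal image of) 𝓞*_{K,+}; that is, a totally positive element x ∈ Kˣ whose image lies in the closure of the group of totally positive units of 𝓞_K is itself a totally positive unit of 𝓞_K. -/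
/-!
The integral finite adeles `∏ 𝓞_v` form a closed subring of `A_{K,f}`, so their units form a
closed subset of `A_{K,f}ˣ`; it contains the image of `𝓞*_{K,+}`, hence its closure. An element
`k ∈ Kˣ` whose image lies in it has `k` and `k⁻¹` integral at every finite place, so both lie
in `𝓞_K`, and a totally positive such `k` is a totally positive unit.
-/

open scoped NumberField
open IsDedekindDomain

/-- The diagonal embedding `Kˣ → A_{K,f}ˣ` on unit groups. -/
noncomputable def unitsDiagonal (K : Type*) [Field K] [NumberField K] :
    Kˣ →* (FiniteAdeleRing (𝓞 K) K)ˣ :=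
  Units.map (algebraMap K (FiniteAdeleRing (𝓞 K) K)).toMonoidHom

theorem Submonoid.isClosed_units {M : Type*} [TopologicalSpace M] [Monoid M]
    {S : Submonoid M} (hS : IsClosed (S : Set M)) : IsClosed (S.units : Set Mˣ) :=
  (hS.preimage Units.continuous_val).inter (hS.preimage Units.continuous_coe_inv)

namespace IsDedekindDomain.FiniteAdeleRing

open HeightOneSpectrum

variable (R K : Type*) [CommRing R] [IsDedekindDomain R] [Field K] [Algebra R K]
  [IsFractionRing R K]

def integralAdeles : Subring (FiniteAdeleRing R K) where
  carrier := {a | ∀ v, a v ∈ v.adicCompletionIntegers K}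
  mul_mem' ha hb v := mul_mem (ha v) (hb v)
  one_mem' _ := one_mem _
  add_mem' ha hb v := add_mem (ha v) (hb v)
  zero_mem' _ := zero_mem _
  neg_mem' ha v := neg_mem (ha v)

variable {R K} in
theorem mem_integralAdeles {a : FiniteAdeleRing R K} :
    a ∈ integralAdeles R K ↔ ∀ v, a v ∈ v.adicCompletionIntegers K :=
  Iff.rfl

theorem isClosed_integralAdeles : IsClosed (integralAdeles R K : Set (FiniteAdeleRing R K)) := by
  simp only [integralAdeles, Subring.coe_set_mk, Set.ofPred_forall]
  exact isClosed_iInter fun v =>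
    (Valued.isClosed_valuationSubring _).preimage (RestrictedProduct.continuous_eval v)

theorem algebraMap_mem_integralAdeles_iff (x : K) :
    algebraMap K (FiniteAdeleRing R K) x ∈ integralAdeles R K ↔ x ∈ (algebraMap R K).range := by
  simp only [mem_integralAdeles, algebraMap_apply, mem_adicCompletionIntegers,
    valuedAdicCompletion_eq_valuation']
  refine ⟨mem_integers_of_valuation_le_one K x, ?_⟩
  rintro ⟨r, rfl⟩ v
  exact v.valuation_le_one r

theorem unitEmbedding_mem_units_integralAdeles_iff (k : Kˣ) :
    unitEmbedding R K k ∈ (integralAdeles R K).toSubmonoid.units ↔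
      (k : K) ∈ (algebraMap R K).range ∧ ((k⁻¹ : Kˣ) : K) ∈ (algebraMap R K).range := by
  rw [Submonoid.mem_units_iff, ← map_inv]
  exact and_congr (algebraMap_mem_integralAdeles_iff R K k)
    (algebraMap_mem_integralAdeles_iff R K _)

end IsDedekindDomain.FiniteAdeleRing

open FiniteAdeleRing

theorem unitsDiagonal_mem_units_integralAdeles_iff (K : Type*) [Field K] [NumberField K]
    (k : Kˣ) :
    unitsDiagonal K k ∈ (integralAdeles (𝓞 K) K).toSubmonoid.units ↔
      IsIntegral ℤ (k : K) ∧ IsIntegral ℤ ((k⁻¹ : Kˣ) : K) := by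
  simp only [IsIntegralClosure.isIntegral_iff (A := 𝓞 K)]
  exact unitEmbedding_mem_units_integralAdeles_iff (𝓞 K) K k

/-- Inside the topological group `A_{K,f}ˣ`, the intersection of the
diagonal image of `K*₊` with the closure of the diagonal image of `𝓞*_{K,+}` equals
the diagonal image of `𝓞*_{K,+}`. -/
theorem totallyPositive_inter_closure_units (K : Type*) [Field K] [NumberField K] :
    (unitsDiagonal K '' (totallyPositiveUnits K : Set Kˣ)) ∩
        closure (unitsDiagonal K '' (totallyPositiveIntegerUnits K : Set Kˣ)) =
      unitsDiagonal K '' (totallyPositiveIntegerUnits K : Set Kˣ) := by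
  refine subset_antisymm ?_ (Set.subset_inter (Set.image_mono fun _ hu => hu.2.2) subset_closure)
  rintro _ ⟨⟨k, hk_pos, rfl⟩, hk_closure⟩
  have h_image : unitsDiagonal K '' (totallyPositiveIntegerUnits K : Set Kˣ) ⊆
      (integralAdeles (𝓞 K) K).toSubmonoid.units := by
    rintro _ ⟨u, hu, rfl⟩
    exact (unitsDiagonal_mem_units_integralAdeles_iff K u).2 ⟨hu.1, hu.2.1⟩
  obtain ⟨hk_int, hk_inv_int⟩ := (unitsDiagonal_mem_units_integralAdeles_iff K k).1 <|
    closure_minimal h_image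
      (Submonoid.isClosed_units (isClosed_integralAdeles (𝓞 K) K)) hk_closure
  exact ⟨k, ⟨hk_int, hk_inv_int, hk_pos⟩, rfl⟩
end

section
/- Let K be a number field, A_{K,f} its finite adele ring, with Aˣ = A_{K,f}ˣ its unit group. Let U ≤ Aˣ be the closure of the diagonal image of K*₊ and V = Ô_Kˣ the integral unit subgroup. Let the group U × V act on W = Aˣ × A_{K,f} by (g,h)·(x,y) = (gxh⁻¹, hy), and similarly let V × U act on W by (g,h)·(x,y) = (gxh⁻¹, hy). Then the map φ(x,y) = (x⁻¹, xy) descends to a homeomorphism from the quotient space W/(U × V) onto the quotient space W/(V × U); moreover, this homeomorphism maps the image of Aˣ × Ô_K onto the image of {(x,y) ∈ W : xy ∈ Ô_K}. -/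
open scoped NumberField
open IsDedekindDomain

open IsDedekindDomain

/-- The integral unit group `Ô_Kˣ ⊆ A_{K,f}ˣ`: units `u` such that both `u` and `u⁻¹`
are integral at every finite place. -/
def integralAdeleUnits (K : Type*) [Field K] [NumberField K] :
    Set (FiniteAdeleRing (𝓞 K) K)ˣ :=
  {u | (∀ v : HeightOneSpectrum (𝓞 K),
          (u : FiniteAdeleRing (𝓞 K) K) v ∈ v.adicCompletionIntegers K) ∧
       (∀ v : HeightOneSpectrum (𝓞 K),
          ((u⁻¹ : (FiniteAdeleRing (𝓞 K) K)ˣ) : FiniteAdeleRing (𝓞 K) K) v ∈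
            v.adicCompletionIntegers K)}

/-- `Ô_Kˣ` as a subgroup of `A_{K,f}ˣ`. -/
def integralAdeleUnitsSubgroup (K : Type*) [Field K] [NumberField K] :
    Subgroup (FiniteAdeleRing (𝓞 K) K)ˣ where
  carrier := integralAdeleUnits K
  one_mem' := ⟨fun v => by exact one_mem (v.adicCompletionIntegers K),
    fun v => by exact one_mem (v.adicCompletionIntegers K)⟩
  mul_mem' {u w} hu hw :=
    ⟨fun v => by rw [Units.val_mul]; exact mul_mem (hu.1 v) (hw.1 v),
     fun v => by rw [mul_inv_rev, Units.val_mul]; exact mul_mem (hw.2 v) (hu.2 v)⟩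
  inv_mem' {u} hu := ⟨hu.2, fun v => by simpa using hu.1 v⟩

/-- The closure of the diagonal image of `K*₊` in `A_{K,f}ˣ`, as a subgroup. -/
noncomputable def closureTotallyPositive (K : Type*) [Field K] [NumberField K] :
    Subgroup (FiniteAdeleRing (𝓞 K) K)ˣ :=
  (Subgroup.map (unitsDiagonal K) (totallyPositiveUnits K)).topologicalClosure

/-- The setoid on `Γ × Y` given by `(x, y) ∼ (g x h⁻¹, h • y)` for `g ∈ U`, `h ∈ V`. -/
def dblSetoid {Γ : Type*} [Group Γ] (Y : Type*) [MulAction Γ Y]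
    (U V : Subgroup Γ) : Setoid (Γ × Y) where
  r p q := ∃ g ∈ U, ∃ h ∈ V, q.1 = g * p.1 * h⁻¹ ∧ q.2 = h • p.2
  iseqv := by
    constructor
    · exact fun p => ⟨1, one_mem U, 1, one_mem V, by simp, by simp⟩
    · rintro p q ⟨g, hg, h, hh, h1, h2⟩
      exact ⟨g⁻¹, inv_mem hg, h⁻¹, inv_mem hh, by rw [h1]; group,
        by rw [h2, inv_smul_smul]⟩
    · rintro p q r ⟨g, hg, h, hh, h1, h2⟩ ⟨g', hg', h', hh', h1', h2'⟩
      exact ⟨g' * g, mul_mem hg' hg, h' * h, mul_mem hh' hh,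
        by rw [h1', h1, mul_inv_rev]; group, by rw [h2', h2, mul_smul]⟩

/-!
The map `φ(x, y) = (x⁻¹, x • y)` is a continuous involution of `G × Y`, and
`φ(g x h⁻¹, h • y) = (h x⁻¹ g⁻¹, g • (x • y))`, so `φ` carries the relation defined by `U × V`
exactly onto the one defined by `V × U`. Hence it descends to a homeomorphism of the quotients,
and since `φ` is its own inverse it maps `{y ∈ S}` onto `φ⁻¹ {y ∈ S} = {x • y ∈ S}`.
-/

section InvSmul

variable {G Y : Type*} [Group G] [MulAction G Y]

def invSmul (p : G × Y) : G × Y := (p.1⁻¹, p.1 • p.2)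

theorem invSmul_involutive : Function.Involutive (invSmul : G × Y → G × Y) :=
  fun p => Prod.ext (inv_inv p.1) (inv_smul_smul p.1 p.2)

theorem image_invSmul_setOf_snd_mem (S : Set Y) :
    invSmul '' {p : G × Y | p.2 ∈ S} = {p | p.1 • p.2 ∈ S} :=
  congrFun (Set.image_eq_preimage_of_inverse invSmul_involutive invSmul_involutive) _

theorem dblSetoid_rel_invSmul {U V : Subgroup G} {p q : G × Y} (hpq : dblSetoid Y U V p q) :
    dblSetoid Y V U (invSmul p) (invSmul q) := by
  obtain ⟨g, hg, h, hh, hq₁, hq₂⟩ := hpq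
  refine ⟨h, hh, g, hg, ?_, ?_⟩
  · simp only [invSmul, hq₁]
    group
  · simp only [invSmul, hq₁, hq₂, smul_smul, inv_mul_cancel_right]

theorem dblSetoid_rel_iff_invSmul (U V : Subgroup G) (p q : G × Y) :
    dblSetoid Y U V p q ↔ dblSetoid Y V U (invSmul p) (invSmul q) := by
  refine ⟨dblSetoid_rel_invSmul, fun h => ?_⟩
  simpa only [invSmul_involutive _] using dblSetoid_rel_invSmul h

variable [TopologicalSpace G] [TopologicalSpace Y] [ContinuousInv G] [ContinuousSMul G Y]

variable (G Y) in
def invSmulHomeomorph : G × Y ≃ₜ G × Y where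
  toEquiv := invSmul_involutive.toPerm _
  continuous_toFun := continuous_fst.inv.prodMk (continuous_fst.smul continuous_snd)
  continuous_invFun := continuous_fst.inv.prodMk (continuous_fst.smul continuous_snd)

def dblSetoidSwapHomeomorph (U V : Subgroup G) :
    Quotient (dblSetoid Y U V) ≃ₜ Quotient (dblSetoid Y V U) :=
  Homeomorph.Quotient.congr (invSmulHomeomorph G Y) (dblSetoid_rel_iff_invSmul U V)

theorem dblSetoidSwapHomeomorph_mk (U V : Subgroup G) (p : G × Y) :
    dblSetoidSwapHomeomorph U V (Quotient.mk _ p) = Quotient.mk _ (invSmul p) :=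
  rfl

theorem image_dblSetoidSwapHomeomorph (U V : Subgroup G) (S : Set Y) :
    dblSetoidSwapHomeomorph U V '' (Quotient.mk _ '' {p : G × Y | p.2 ∈ S}) =
      Quotient.mk _ '' {p | p.1 • p.2 ∈ S} := by
  rw [← image_invSmul_setOf_snd_mem, Set.image_image, Set.image_image]
  rfl

end InvSmul

/-- The involution `φ(x, y) = (x⁻¹, xy)` of `A_{K,f}ˣ × A_{K,f}`
descends to a homeomorphism `W/(U × V) → W/(V × U)`, where `U` is the closure of the
diagonal image of `K*₊` and `V = Ô_Kˣ`; it maps the image of `Aˣ × Ô_K` onto the image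
of `{(x, y) : xy ∈ Ô_K}`. -/
theorem involution_descends_to_homeomorph (K : Type*) [Field K] [NumberField K] :
    ∃ f : Quotient (dblSetoid (FiniteAdeleRing (𝓞 K) K)
            (closureTotallyPositive K) (integralAdeleUnitsSubgroup K)) ≃ₜ
          Quotient (dblSetoid (FiniteAdeleRing (𝓞 K) K)
            (integralAdeleUnitsSubgroup K) (closureTotallyPositive K)),
      (∀ p : (FiniteAdeleRing (𝓞 K) K)ˣ × FiniteAdeleRing (𝓞 K) K,
        f (Quotient.mk (dblSetoid (FiniteAdeleRing (𝓞 K) K)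
              (closureTotallyPositive K) (integralAdeleUnitsSubgroup K)) p) =
          Quotient.mk (dblSetoid (FiniteAdeleRing (𝓞 K) K)
              (integralAdeleUnitsSubgroup K) (closureTotallyPositive K))
            (p.1⁻¹, (p.1 : FiniteAdeleRing (𝓞 K) K) * p.2)) ∧
      ⇑f '' (Quotient.mk (dblSetoid (FiniteAdeleRing (𝓞 K) K)
              (closureTotallyPositive K) (integralAdeleUnitsSubgroup K)) ''
          {p : (FiniteAdeleRing (𝓞 K) K)ˣ × FiniteAdeleRing (𝓞 K) K |
            ∀ v : HeightOneSpectrum (𝓞 K), p.2 v ∈ v.adicCompletionIntegers K}) =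
        Quotient.mk (dblSetoid (FiniteAdeleRing (𝓞 K) K)
            (integralAdeleUnitsSubgroup K) (closureTotallyPositive K)) ''
          {p : (FiniteAdeleRing (𝓞 K) K)ˣ × FiniteAdeleRing (𝓞 K) K |
            ∀ v : HeightOneSpectrum (𝓞 K),
              ((p.1 : FiniteAdeleRing (𝓞 K) K) * p.2) v ∈ v.adicCompletionIntegers K} := by
  refine ⟨dblSetoidSwapHomeomorph _ _, dblSetoidSwapHomeomorph_mk _ _, ?_⟩
  exact image_dblSetoidSwapHomeomorph _ _
    {a : FiniteAdeleRing (𝓞 K) K | ∀ v : HeightOneSpectrum (𝓞 K), a v ∈ v.adicCompletionIntegers K}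
end

section
/- Let Ḡ be a topological group, Γ̄ a compact open subgroup of Ḡ, G a dense subgroup of Ḡ, and Γ = G ∩ Γ̄. Then for every g ∈ G, [Γ : Γ ∩ gΓg⁻¹] = [Γ̄ : Γ̄ ∩ gΓ̄g⁻¹]; in particular, Γ and gΓg⁻¹ are commensurable subgroups of Ḡ. -/
/-!
Since `Γ̄ ∩ gΓ̄g⁻¹` is open, each of its left cosets in `Γ̄` is open and so meets the dense
subgroup `G`; hence the cosets of `Γ ∩ gΓ̄g⁻¹` in `Γ` already exhaust those of `Γ̄ ∩ gΓ̄g⁻¹` in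
`Γ̄`. For `g ∈ G` conjugation fixes `G`, so `gΓg⁻¹ = G ∩ gΓ̄g⁻¹` and the two indices agree.
They are finite because an open subgroup of the compact group `Γ̄` has finite index, and
applying this to `g⁻¹` as well gives commensurability.
-/

open scoped Pointwise

namespace Subgroup

variable {G : Type*} [Group G]

theorem relIndex_eq_of_le_of_forall_exists {H K L : Subgroup G} (hKL : K ≤ L)
    (h : ∀ x ∈ L, ∃ y ∈ K, y⁻¹ * x ∈ H) : H.relIndex K = H.relIndex L := by
  refine Nat.card_congr (Equiv.ofBijective (quotientSubgroupOfEmbeddingOfLE H hKL)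
    ⟨(quotientSubgroupOfEmbeddingOfLE H hKL).injective, ?_⟩)
  rintro ⟨x, hx⟩
  obtain ⟨y, hyK, hyx⟩ := h x hx
  exact ⟨(⟨y, hyK⟩ : K), QuotientGroup.eq.mpr hyx⟩

theorem inf_relIndex_inf_left (G' H K : Subgroup G) :
    (G' ⊓ H).relIndex (G' ⊓ K) = H.relIndex (G' ⊓ K) := by
  rw [← inf_relIndex_right, ← inf_relIndex_right H, ← inf_inf_distrib_left, inf_left_comm]

variable [TopologicalSpace G] [IsTopologicalGroup G]

theorem relIndex_inf_eq_of_dense {G' H K : Subgroup G} (hG' : Dense (G' : Set G))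
    (hHK : IsOpen ((H ⊓ K : Subgroup G) : Set G)) : H.relIndex (G' ⊓ K) = H.relIndex K := by
  refine relIndex_eq_of_le_of_forall_exists inf_le_right fun x hx ↦ ?_
  have hopen : IsOpen ((x⁻¹ * ·) ⁻¹' ((H ⊓ K : Subgroup G) : Set G)) :=
    hHK.preimage (continuous_const_mul x⁻¹)
  obtain ⟨y, hyG', hy⟩ := hG'.exists_mem_open hopen ⟨x, by simp [one_mem]⟩
  have hyK : y ∈ K := by simpa using K.mul_mem hx hy.2
  exact ⟨y, ⟨hyG', hyK⟩, by simpa using H.inv_mem hy.1⟩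

theorem relIndex_ne_zero_of_isOpen_of_isCompact {H K : Subgroup G} (hH : IsOpen (H : Set G))
    (hK : IsCompact (K : Set G)) : H.relIndex K ≠ 0 :=
  have : CompactSpace K := isCompact_iff_compactSpace.mp hK
  have : Finite (K ⧸ H.subgroupOf K) := quotient_finite_of_isOpen _ (subgroupOf_isOpen K H hH)
  index_ne_zero_of_finite

-- `MulAut.conj g` and `ConjAct.toConjAct g` act on `G` by the same map.
theorem isOpen_conj_smul (g : G) {H : Subgroup G} (hH : IsOpen (H : Set G)) :
    IsOpen ((MulAut.conj g • H : Subgroup G) : Set G) :=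
  hH.smul (ConjAct.toConjAct g)

theorem relIndex_conj_smul_inf_of_dense {G' K : Subgroup G} (hG' : Dense (G' : Set G))
    (hK : IsOpen (K : Set G)) {g : G} (hg : g ∈ G') :
    (MulAut.conj g • (G' ⊓ K)).relIndex (G' ⊓ K) = (MulAut.conj g • K).relIndex K := by
  rw [smul_inf, conj_smul_eq_self_of_mem hg, inf_relIndex_inf_left]
  exact relIndex_inf_eq_of_dense hG' ((isOpen_conj_smul g hK).inter hK)

end Subgroup

open Subgroup in
/-- Let `Γ̄` be a compact open subgroup of a topological group `Gbar`,
`G` a dense subgroup of `Gbar`, and `Γ = G ∩ Γ̄`. Then for every `g ∈ G`,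
`[Γ : Γ ∩ gΓg⁻¹] = [Γ̄ : Γ̄ ∩ gΓ̄g⁻¹]`; in particular `Γ` and `gΓg⁻¹` are
commensurable. -/
theorem index_eq_of_dense_in_compact_open {Gbar : Type*} [Group Gbar] [TopologicalSpace Gbar]
    [IsTopologicalGroup Gbar] (Γbar : Subgroup Gbar) (hc : IsCompact (Γbar : Set Gbar))
    (ho : IsOpen (Γbar : Set Gbar)) (G : Subgroup Gbar) (hd : Dense (G : Set Gbar))
    (g : Gbar) (hg : g ∈ G) :
    ((G ⊓ Γbar).map (MulAut.conj g).toMonoidHom).relIndex (G ⊓ Γbar) =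
        (Γbar.map (MulAut.conj g).toMonoidHom).relIndex Γbar ∧
      Subgroup.Commensurable (G ⊓ Γbar) ((G ⊓ Γbar).map (MulAut.conj g).toMonoidHom) := by
  change (MulAut.conj g • (G ⊓ Γbar)).relIndex (G ⊓ Γbar) = (MulAut.conj g • Γbar).relIndex Γbar ∧
    Commensurable (G ⊓ Γbar) (MulAut.conj g • (G ⊓ Γbar))
  have hfinite : ∀ h ∈ G, (MulAut.conj h • (G ⊓ Γbar)).relIndex (G ⊓ Γbar) ≠ 0 := fun h hh ↦ by
    rw [relIndex_conj_smul_inf_of_dense hd ho hh]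
    exact relIndex_ne_zero_of_isOpen_of_isCompact (isOpen_conj_smul h ho) hc
  refine ⟨relIndex_conj_smul_inf_of_dense hd ho hg, ?_, hfinite g hg⟩
  rw [← relIndex_pointwise_smul (MulAut.conj g)⁻¹, inv_smul_smul, ← map_inv]
  exact hfinite g⁻¹ (G.inv_mem hg)
end

section
/- Let K be a number field. The subgroup 𝒫_{K,+} of the group J_K of invertible fractional ideals of 𝓞_K consisting of the principal fractional ideals x𝓞_K generated by totally positive elements x ∈ K*₊ has finite index in J_K; that is, the narrow class group J_K/𝒫_{K,+} is finite. -/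
/-!
`K*₊` is the intersection, over the finitely many real embeddings `φ`, of the preimages
`φ⁻¹(ℝ_{>0})`, each of index two, so it has finite index in `Kˣ`. Its image `𝒫_{K,+}` under
`x ↦ x𝓞_K` therefore has finite index in the principal ideals, which in turn have finite
index in `J_K` because the class group is finite.
-/

open scoped NumberField
open scoped nonZeroDivisors

/-- The subgroup `𝒫_{K,+}` of invertible fractional ideals generated by a totally
positive element. -/
noncomputable def narrowPrincipalIdeals (K : Type*) [Field K] [NumberField K] :
    Subgroup (FractionalIdeal (𝓞 K)⁰ K)ˣ :=
  Subgroup.map (toPrincipalIdeal (𝓞 K) K) (totallyPositiveUnits K)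

namespace Subgroup

variable {G G' : Type*} [Group G] [Group G']

theorem finiteIndex_comap (f : G' →* G) (H : Subgroup G) [H.FiniteIndex] :
    (H.comap f).FiniteIndex :=
  ⟨fun h ↦ FiniteIndex.index_ne_zero (H := H) <|
    index_eq_zero_of_relIndex_eq_zero (K := f.range) (by rwa [← index_comap])⟩

theorem finiteIndex_map (f : G →* G') (H : Subgroup G) [H.FiniteIndex] [f.range.FiniteIndex] :
    (H.map f).FiniteIndex :=
  have : (H ⊔ f.ker).FiniteIndex := finiteIndex_of_le le_sup_left
  ⟨by rw [index_map]; exact mul_ne_zero FiniteIndex.index_ne_zero FiniteIndex.index_ne_zero⟩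

end Subgroup

instance Units.finiteIndex_posSubgroup (R : Type*) [Ring R] [LinearOrder R]
    [IsStrictOrderedRing R] : (Units.posSubgroup R).FiniteIndex :=
  ⟨by rw [Units.index_posSubgroup]; exact two_ne_zero⟩

theorem totallyPositiveUnits_eq_iInf_comap (K : Type*) [Field K] :
    totallyPositiveUnits K =
      ⨅ φ : K →+* ℝ, (Units.posSubgroup ℝ).comap (Units.map (φ : K →* ℝ)) := by
  ext x
  simp [totallyPositiveUnits, Subgroup.mem_iInf, Units.mem_posSubgroup]

instance finiteIndex_totallyPositiveUnits (K : Type*) [Field K] [NumberField K] :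
    (totallyPositiveUnits K).FiniteIndex := by
  rw [totallyPositiveUnits_eq_iInf_comap]
  exact Subgroup.finiteIndex_iInf fun _ ↦ Subgroup.finiteIndex_comap _ _

instance finiteIndex_range_toPrincipalIdeal (K : Type*) [Field K] [NumberField K] :
    (toPrincipalIdeal (𝓞 K) K).range.FiniteIndex :=
  have : Finite ((FractionalIdeal (𝓞 K)⁰ K)ˣ ⧸ (toPrincipalIdeal (𝓞 K) K).range) :=
    .of_equiv _ (ClassGroup.equiv K).toEquiv
  Subgroup.finiteIndex_of_finite_quotient

/-- The narrow class group `J_K/𝒫_{K,+}` of a number field is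
finite. -/
theorem narrowClassGroup_finite (K : Type*) [Field K] [NumberField K] :
    Finite ((FractionalIdeal (𝓞 K)⁰ K)ˣ ⧸ narrowPrincipalIdeals K) := by
  have : (narrowPrincipalIdeals K).FiniteIndex := Subgroup.finiteIndex_map _ _
  infer_instance
end

section
/- Let K be a number field. For every function ε from the set of ring embeddings φ : K → ℝ to {+1, −1}, there exists x ∈ Kˣ such that for every ring embedding φ : K → ℝ the sign of φ(x) equals ε(φ). -/
/-!
As `x` runs over `K`, the vectors `(φ x)_φ` form a `ℚ`-subspace of `ℝ^(K →+* ℝ)` whose real span is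
everything, by Dedekind's independence of characters. A `ℚ`-subspace with full real span is dense,
so some `x` lies within sup-distance `1` of `ε`, and then each `φ x` has the sign `ε φ`.
-/

theorem LinearIndependent.span_range_eval_eq_top {ι X L : Type*} [Fintype ι] [Field L]
    {f : ι → X → L} (hf : LinearIndependent L f) :
    Submodule.span L (Set.range fun x i => f i x) = ⊤ := by
  classical
  by_contra hne
  obtain ⟨g, hg0, hg⟩ :=
    Submodule.exists_dual_map_eq_bot_of_lt_top (lt_top_iff_ne_top.mpr hne) inferInstance
  have hvanish (x : X) : g (fun i => f i x) = 0 :=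
    LinearMap.le_ker_iff_map.mpr hg (Submodule.subset_span (Set.mem_range_self x))
  -- the coordinates of a functional vanishing on all evaluation vectors are a relation among the `f i`
  have hc := Fintype.linearIndependent_iff.mp hf (fun i => g fun j => if i = j then 1 else 0) <|
    funext fun x => by
      simpa [Finset.sum_apply, mul_comm] using
        (LinearMap.pi_apply_eq_sum_univ g _).symm.trans (hvanish x)
  exact hg0 <| LinearMap.ext fun v => by simp [LinearMap.pi_apply_eq_sum_univ g v, hc]

theorem Submodule.dense_of_span_real_eq_top {E : Type*} [NormedAddCommGroup E] [NormedSpace ℝ E]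
    [FiniteDimensional ℝ E] [Module ℚ E] (S : Submodule ℚ E)
    (hS : Submodule.span ℝ (S : Set E) = ⊤) : Dense (S : Set E) := by
  obtain ⟨t, htS, hspan, hli⟩ := exists_linearIndependent ℝ (S : Set E)
  have : Fintype t := @Fintype.ofFinite _ hli.finite
  let b : Module.Basis t ℝ E := .mk hli (by simp [hspan, hS])
  let coords : (t → ℝ) ≃L[ℝ] E := b.equivFun.symm.toContinuousLinearEquiv
  have hrat : DenseRange fun (q : t → ℚ) i => (q i : ℝ) := .piMap fun _ => Rat.denseRange_cast
  refine (coords.surjective.denseRange.comp hrat coords.continuous).mono ?_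
  rintro _ ⟨q, rfl⟩
  simp only [Function.comp_apply, coords, b, LinearEquiv.coe_toContinuousLinearEquiv',
    Module.Basis.equivFun_symm_apply, Module.Basis.mk_apply]
  exact S.sum_mem fun i _ => ratCast_smul_eq ℝ ℚ (q i) (i : E) ▸ S.smul_mem _ (htS i.2)

theorem denseRange_eval_realEmbeddings (K : Type*) [Field K] [CharZero K] [Finite (K →+* ℝ)] :
    DenseRange fun (x : K) (φ : K →+* ℝ) => φ x := by
  have : Fintype (K →+* ℝ) := Fintype.ofFinite _
  let ev : K →ₗ[ℚ] (K →+* ℝ) → ℝ := LinearMap.pi fun φ => φ.toRatAlgHom.toLinearMap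
  have hli : LinearIndependent ℝ fun (φ : K →+* ℝ) (x : K) => φ x :=
    (linearIndependent_monoidHom K ℝ).comp (fun φ : K →+* ℝ => (φ : K →* ℝ))
      RingHom.coe_monoidHom_injective
  have hdense := (LinearMap.range ev).dense_of_span_real_eq_top
    (by rw [LinearMap.coe_range]; exact hli.span_range_eval_eq_top)
  rwa [LinearMap.coe_range] at hdense

theorem Real.sign_eq_of_abs_sub_lt_one {a e : ℝ} (he : e = 1 ∨ e = -1) (h : |a - e| < 1) :
    Real.sign a = e := by
  rcases he with rfl | rfl
  · exact Real.sign_of_pos (by linarith [(abs_lt.mp h).1])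
  · exact Real.sign_of_neg (by linarith [(abs_lt.mp h).2])

/-- In a number field `K`, every prescribed choice of signs at the
real embeddings is realized by a nonzero element: for every `ε : (K →+* ℝ) → ℝ` with
values in `{1, -1}` there is `x ∈ Kˣ` with `sign (φ x) = ε φ` for all real
embeddings `φ`. -/
theorem exists_element_with_prescribed_signs (K : Type*) [Field K] [NumberField K]
    (ε : (K →+* ℝ) → ℝ) (hε : ∀ φ : K →+* ℝ, ε φ = 1 ∨ ε φ = -1) :
    ∃ x : K, x ≠ 0 ∧ ∀ φ : K →+* ℝ, Real.sign (φ x) = ε φ := by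
  rcases isEmpty_or_nonempty (K →+* ℝ) with _ | ⟨⟨φ₀⟩⟩
  · exact ⟨1, one_ne_zero, isEmptyElim⟩
  obtain ⟨x, hx⟩ := (denseRange_eval_realEmbeddings K).exists_mem_open
    (Metric.isOpen_ball (x := ε) (ε := 1)) ⟨ε, Metric.mem_ball_self one_pos⟩
  have hsign (φ : K →+* ℝ) : Real.sign (φ x) = ε φ :=
    Real.sign_eq_of_abs_sub_lt_one (hε φ) ((dist_pi_lt_iff one_pos).mp hx φ)
  refine ⟨x, fun hx0 => ?_, hsign⟩
  have h := hsign φ₀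
  rw [hx0, map_zero, Real.sign_zero] at h
  rcases hε φ₀ with h' | h' <;> linarith
end

section
/- For all real numbers x > 1, s ≥ 1, and a with 0 ≤ a ≤ 1, the function β ↦ (1 − a·x^{−sβ})/(1 − x^{−β}) is non-increasing on (0, ∞). -/
/-!
Substituting `t = x^{-β}`, which decreases from `1` to `0` as `β` runs over `(0, ∞)`, the function
becomes `t ↦ (1 - a t^s)/(1 - t) = (1 - a)/(1 - t) + a (1 - t^s)/(1 - t)`, so it suffices that this
is non-decreasing on `[0, 1)`. The first summand clearly is, and the second is `a` times the slope
of the convex function `t ↦ t^s` between `t` and `1`, which is non-decreasing in `t`.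
-/

open Real Set

theorem monotoneOn_one_sub_rpow_div_one_sub {s : ℝ} (hs : 1 ≤ s) :
    MonotoneOn (fun t : ℝ => (1 - t ^ s) / (1 - t)) (Ico 0 1) := by
  intro t ht u hu htu
  have hslope := (convexOn_rpow hs).secant_mono (a := 1) (x := t) (y := u)
    (by norm_num) ht.1 hu.1 ht.2.ne hu.2.ne htu
  have hflip (v : ℝ) : (1 - v ^ s) / (1 - v) = (v ^ s - 1) / (v - 1) := by
    rw [← neg_div_neg_eq, neg_sub, neg_sub]
  simpa only [hflip, one_rpow] using hslope

theorem monotoneOn_one_sub_div_one_sub {a : ℝ} (ha : a ≤ 1) :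
    MonotoneOn (fun t : ℝ => (1 - a) / (1 - t)) (Iio 1) :=
  fun _t _ _u hu htu =>
    div_le_div_of_nonneg_left (sub_nonneg.2 ha) (sub_pos.2 hu) (sub_le_sub_left htu 1)

theorem monotoneOn_one_sub_mul_rpow_div_one_sub {s a : ℝ} (hs : 1 ≤ s) (ha0 : 0 ≤ a)
    (ha1 : a ≤ 1) :
    MonotoneOn (fun t : ℝ => (1 - a * t ^ s) / (1 - t)) (Ico 0 1) := by
  have hsplit : (fun t : ℝ => (1 - a * t ^ s) / (1 - t)) =
      fun t => (1 - a) / (1 - t) + a * ((1 - t ^ s) / (1 - t)) := by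
    funext t
    ring
  rw [hsplit]
  refine ((monotoneOn_one_sub_div_one_sub ha1).mono fun t ht => ht.2).add ?_
  exact fun t ht u hu htu =>
    mul_le_mul_of_nonneg_left (monotoneOn_one_sub_rpow_div_one_sub hs ht hu htu) ha0

/-- For real `x > 1`, `s ≥ 1` and `0 ≤ a ≤ 1`, the function
`β ↦ (1 - a x^{-sβ})/(1 - x^{-β})` is non-increasing on `(0, ∞)`. -/
theorem antitoneOn_ratio (x s a : ℝ) (hx : 1 < x) (hs : 1 ≤ s) (ha0 : 0 ≤ a)
    (ha1 : a ≤ 1) :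
    AntitoneOn (fun β : ℝ => (1 - a * x ^ (-(s * β))) / (1 - x ^ (-β)))
      (Set.Ioi (0 : ℝ)) := by
  have hx0 : 0 < x := zero_lt_one.trans hx
  have hsubst : (fun β : ℝ => (1 - a * x ^ (-(s * β))) / (1 - x ^ (-β))) =
      (fun t : ℝ => (1 - a * t ^ s) / (1 - t)) ∘ fun β => x ^ (-β) := by
    funext β
    rw [Function.comp_apply, ← rpow_mul hx0.le, neg_mul, mul_comm β s]
  have hanti : AntitoneOn (fun β : ℝ => x ^ (-β)) (Ioi 0) :=
    fun _β _ _γ _ hβγ => rpow_le_rpow_of_exponent_le hx.le (neg_le_neg hβγ)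
  have hmaps : MapsTo (fun β : ℝ => x ^ (-β)) (Ioi 0) (Ico 0 1) :=
    fun _β hβ => ⟨(rpow_pos_of_pos hx0 _).le, rpow_lt_one_of_one_lt_of_neg hx (neg_lt_zero.2 hβ)⟩
  rw [hsubst]
  exact (monotoneOn_one_sub_mul_rpow_div_one_sub hs ha0 ha1).comp_AntitoneOn hanti hmaps
end
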